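/- Let A ∈ [0,1], p₁, p₂ ∈ [0,1], and let ρ_A = [[(1+A)/2, −(i/2)√(1−A²)], [(i/2)√(1−A²), (1−A)/2]]. Let ε_GAD be the generalized amplitude damping channel with Kraus operators E₀ = √p₁·diag(1, √(1−p₂)), E₁ = √p₁·[[0, √p₂],[0,0]], E₂ = √(1−p₁)·diag(√(1−p₂), 1), E₃ = √(1−p₁)·[[0,0],[√p₂, 0]]. Then F_{l₁}(ρ_A) − F_{l₁}(ε_GAD(ρ_A)) = F_R(ρ_A) − F_R(ε_GAD(ρ_A)) = (1 − √(1−p₂))·√(1−A²). -/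

import Mathlib

open Matrix Kronecker BigOperators
open scoped ComplexOrder

noncomputable section

/-- A density matrix: positive semidefinite with trace 1. -/
def IsDensityMatrix {n : Type*} [Fintype n] [DecidableEq n] (ρ : Matrix n n ℂ) : Prop :=
  ρ.PosSemidef ∧ ρ.trace = 1

/-- The l₁-norm imaginarity measure: sum of |Im ρᵢⱼ| over off-diagonal entries. -/
noncomputable def Fl1 {n : Type*} [Fintype n] [DecidableEq n] (ρ : Matrix n n ℂ) : ℝ :=
  ∑ i, ∑ j, if i = j then 0 else |(ρ i j).im|

/-- The trace norm ‖M‖₁ = Tr √(M†M). -/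
noncomputable def traceNorm {n : Type*} [Fintype n] [DecidableEq n] (M : Matrix n n ℂ) : ℝ :=
  (((Matrix.posSemidef_conjTranspose_mul_self M).1.eigenvectorUnitary.1 *
      diagonal (((↑) : ℝ → ℂ) ∘ (Real.sqrt ∘ (Matrix.posSemidef_conjTranspose_mul_self M).1.eigenvalues)) *
      (star (Matrix.posSemidef_conjTranspose_mul_self M).1.eigenvectorUnitary : Matrix n n ℂ)).trace).re

/-- The robustness of imaginarity: (1/2)‖ρ − ρᵀ‖₁. -/
noncomputable def FR {n : Type*} [Fintype n] [DecidableEq n] (ρ : Matrix n n ℂ) : ℝ :=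
  traceNorm (ρ - ρᵀ) / 2

/-- Von Neumann entropy (base-2), via eigenvalues of a Hermitian matrix
(junk value 0 if not Hermitian). -/
noncomputable def vnEntropy {n : Type*} [Fintype n] [DecidableEq n] (σ : Matrix n n ℂ) : ℝ :=
  if h : σ.IsHermitian then -∑ j, (h.eigenvalues j) * Real.logb 2 (h.eigenvalues j) else 0

/-- The relative entropy of imaginarity: S(Re ρ) − S(ρ), Re ρ = (ρ + ρᵀ)/2. -/
noncomputable def Fr {n : Type*} [Fintype n] [DecidableEq n] (ρ : Matrix n n ℂ) : ℝ :=
  vnEntropy ((1/2 : ℂ) • (ρ + ρᵀ)) - vnEntropy ρ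

/-- The canonical single-qubit state ρ_A. -/
noncomputable def rhoA (A : ℝ) : Matrix (Fin 2) (Fin 2) ℂ :=
  !![(((1 + A) / 2 : ℝ) : ℂ), -(Complex.I / 2) * (Real.sqrt (1 - A ^ 2) : ℂ);
     (Complex.I / 2) * (Real.sqrt (1 - A ^ 2) : ℂ), (((1 - A) / 2 : ℝ) : ℂ)]

/-- Density matrix of the maximal imaginary state |+⟩ = (|0⟩ + i|1⟩)/√2. -/
noncomputable def Mplus : Matrix (Fin 2) (Fin 2) ℂ :=
  (1/2 : ℂ) • !![1, -Complex.I; Complex.I, 1]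

/-- The generalized amplitude damping channel. -/
noncomputable def gad (p₁ p₂ : ℝ) (ρ : Matrix (Fin 2) (Fin 2) ℂ) : Matrix (Fin 2) (Fin 2) ℂ :=
  ((Real.sqrt p₁ : ℂ) • !![1, 0; 0, (Real.sqrt (1 - p₂) : ℂ)]) * ρ *
    ((Real.sqrt p₁ : ℂ) • !![1, 0; 0, (Real.sqrt (1 - p₂) : ℂ)])ᴴ +
  ((Real.sqrt p₁ : ℂ) • !![0, (Real.sqrt p₂ : ℂ); 0, 0]) * ρ *
    ((Real.sqrt p₁ : ℂ) • !![0, (Real.sqrt p₂ : ℂ); 0, 0])ᴴ +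
  ((Real.sqrt (1 - p₁) : ℂ) • !![(Real.sqrt (1 - p₂) : ℂ), 0; 0, 1]) * ρ *
    ((Real.sqrt (1 - p₁) : ℂ) • !![(Real.sqrt (1 - p₂) : ℂ), 0; 0, 1])ᴴ +
  ((Real.sqrt (1 - p₁) : ℂ) • !![0, 0; (Real.sqrt p₂ : ℂ), 0]) * ρ *
    ((Real.sqrt (1 - p₁) : ℂ) • !![0, 0; (Real.sqrt p₂ : ℂ), 0])ᴴ

/-! For a qubit both measures only see the off-diagonal entries: `F_{l₁} ρ = |Im ρ₀₁| + |Im ρ₁₀|`,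
and `ρ - ρᵀ = [[0, -z], [z, 0]]` with `z = ρ₁₀ - ρ₀₁` satisfies `(ρ - ρᵀ)ᴴ (ρ - ρᵀ) = |z|² · 1`, so
`F_R ρ = |z|`. Every Kraus operator of the GAD channel is diagonal or strictly triangular, and the
off-diagonal entries of `ε_GAD ρ` are those of `ρ` scaled by `(p₁ + (1 - p₁)) √(1 - p₂)`. Hence both
measures are multiplied by `√(1 - p₂)`, and both equal `√(1 - A²)` at `ρ_A`. -/

lemma traceNorm_eq_re_trace_cfc_sqrt {n : Type*} [Fintype n] [DecidableEq n] (M : Matrix n n ℂ) :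
    traceNorm M = (cfc Real.sqrt (Mᴴ * M)).trace.re := by
  rw [traceNorm, (Matrix.posSemidef_conjTranspose_mul_self M).1.cfc_eq, Matrix.IsHermitian.cfc,
    Unitary.conjStarAlgAut_apply]
  rfl

lemma traceNorm_of_conjTranspose_mul_self_eq_algebraMap {n : Type*} [Fintype n] [DecidableEq n]
    (M : Matrix n n ℂ) {c : ℝ} (hc : 0 ≤ c)
    (hM : Mᴴ * M = algebraMap ℝ (Matrix n n ℂ) (c ^ 2)) :
    traceNorm M = Fintype.card n * c := by
  rw [traceNorm_eq_re_trace_cfc_sqrt, hM, cfc_algebraMap, Real.sqrt_sq hc]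
  simp [Matrix.trace, Matrix.algebraMap_matrix_apply]

lemma traceNorm_antisymm_fin_two (z : ℂ) :
    traceNorm !![0, -z; z, 0] = 2 * ‖z‖ := by
  refine traceNorm_of_conjTranspose_mul_self_eq_algebraMap _ (norm_nonneg z) ?_
  ext i j
  fin_cases i <;> fin_cases j <;>
    simp [Matrix.mul_apply, Matrix.algebraMap_matrix_apply, Complex.conj_mul']

lemma Fl1_fin_two (ρ : Matrix (Fin 2) (Fin 2) ℂ) :
    Fl1 ρ = |(ρ 0 1).im| + |(ρ 1 0).im| := by
  simp [Fl1, Fin.sum_univ_two]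

lemma FR_fin_two (ρ : Matrix (Fin 2) (Fin 2) ℂ) :
    FR ρ = ‖ρ 1 0 - ρ 0 1‖ := by
  have hsub : ρ - ρᵀ = !![0, -(ρ 1 0 - ρ 0 1); ρ 1 0 - ρ 0 1, 0] := by
    ext i j
    fin_cases i <;> fin_cases j <;> simp
  rw [FR, hsub, traceNorm_antisymm_fin_two]
  ring

lemma Complex.ofReal_sqrt_sq_add_ofReal_sqrt_one_sub_sq {p : ℝ} (hp0 : 0 ≤ p) (hp1 : p ≤ 1) :
    (Real.sqrt p : ℂ) ^ 2 + (Real.sqrt (1 - p) : ℂ) ^ 2 = 1 := by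
  norm_cast
  rw [Real.sq_sqrt hp0, Real.sq_sqrt (sub_nonneg.mpr hp1)]
  ring

section GAD

variable {p₁ : ℝ} (hp₁0 : 0 ≤ p₁) (hp₁1 : p₁ ≤ 1) (p₂ : ℝ) (ρ : Matrix (Fin 2) (Fin 2) ℂ)
include hp₁0 hp₁1

lemma gad_apply_zero_one : gad p₁ p₂ ρ 0 1 = Real.sqrt (1 - p₂) * ρ 0 1 := by
  rw [Matrix.eta_fin_two ρ]
  simp [gad, Matrix.vecMul, dotProduct, Fin.sum_univ_two]
  linear_combination (Real.sqrt (1 - p₂) * ρ 0 1 : ℂ) *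
    Complex.ofReal_sqrt_sq_add_ofReal_sqrt_one_sub_sq hp₁0 hp₁1

lemma gad_apply_one_zero : gad p₁ p₂ ρ 1 0 = Real.sqrt (1 - p₂) * ρ 1 0 := by
  rw [Matrix.eta_fin_two ρ]
  simp [gad, Matrix.vecMul, dotProduct, Fin.sum_univ_two]
  linear_combination (Real.sqrt (1 - p₂) * ρ 1 0 : ℂ) *
    Complex.ofReal_sqrt_sq_add_ofReal_sqrt_one_sub_sq hp₁0 hp₁1

lemma Fl1_gad : Fl1 (gad p₁ p₂ ρ) = Real.sqrt (1 - p₂) * Fl1 ρ := by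
  simp only [Fl1_fin_two, gad_apply_zero_one hp₁0 hp₁1, gad_apply_one_zero hp₁0 hp₁1,
    Complex.im_ofReal_mul, abs_mul, abs_of_nonneg (Real.sqrt_nonneg _)]
  ring

lemma FR_gad : FR (gad p₁ p₂ ρ) = Real.sqrt (1 - p₂) * FR ρ := by
  rw [FR_fin_two, FR_fin_two, gad_apply_zero_one hp₁0 hp₁1, gad_apply_one_zero hp₁0 hp₁1,
    ← mul_sub, norm_mul, Complex.norm_real, Real.norm_of_nonneg (Real.sqrt_nonneg _)]

end GAD

lemma Fl1_rhoA (A : ℝ) : Fl1 (rhoA A) = Real.sqrt (1 - A ^ 2) := by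
  simp [Fl1_fin_two, rhoA, abs_of_nonneg (Real.sqrt_nonneg _)]
  ring

lemma FR_rhoA (A : ℝ) : FR (rhoA A) = Real.sqrt (1 - A ^ 2) := by
  simp [FR_fin_two, rhoA, ← add_mul, add_halves, abs_of_nonneg (Real.sqrt_nonneg _)]

theorem decay_gad_general (A p₁ p₂ : ℝ)
    (hp₁0 : 0 ≤ p₁) (hp₁1 : p₁ ≤ 1) :
    Fl1 (rhoA A) - Fl1 (gad p₁ p₂ (rhoA A))
      = (1 - Real.sqrt (1 - p₂)) * Real.sqrt (1 - A ^ 2) ∧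
    FR (rhoA A) - FR (gad p₁ p₂ (rhoA A))
      = (1 - Real.sqrt (1 - p₂)) * Real.sqrt (1 - A ^ 2) := by
  rw [Fl1_gad hp₁0 hp₁1, FR_gad hp₁0 hp₁1, Fl1_rhoA, FR_rhoA]
  constructor <;> ring

/-- decay of F_{l₁} and F_R under the generalized amplitude damping channel. -/
theorem decay_gad (A p₁ p₂ : ℝ) (hA0 : 0 ≤ A) (hA1 : A ≤ 1)
    (hp₁0 : 0 ≤ p₁) (hp₁1 : p₁ ≤ 1) (hp₂0 : 0 ≤ p₂) (hp₂1 : p₂ ≤ 1) :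
    Fl1 (rhoA A) - Fl1 (gad p₁ p₂ (rhoA A))
      = (1 - Real.sqrt (1 - p₂)) * Real.sqrt (1 - A ^ 2) ∧
    FR (rhoA A) - FR (gad p₁ p₂ (rhoA A))
      = (1 - Real.sqrt (1 - p₂)) * Real.sqrt (1 - A ^ 2) :=
  decay_gad_general A p₁ p₂ hp₁0 hp₁1
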